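/- Let K be a field of characteristic zero, let (μ₊, σ₊) satisfy ν(μ₊) > 0 and ν(σ₊) > 1, and let λ ∈ K. Then the binomial family (C(λ,n) · (μ₊,σ₊)^{⋊n})_{n∈ℕ}, where C(λ,n) := λ(λ-1)⋯(λ-n+1)/n! is the generalized binomial coefficient, is summable in K[[x]] × 𝔐 with the product topology, and its sum (A, B) belongs to the Riordan group UM × US, i.e. the constant term of A equals 1 and B - x has order strictly greater than 1. -/

import Mathlib

/-!
Common setting: `K[[x]]` is `PowerSeries K` for a field `K` of characteristic zero.
`PowerSeries.order` (valued in `ℕ∞ = WithTop ℕ`) is the order/valuation `ν`; note that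
multiplication and powers on `ℕ∞` obey exactly the conventions of the paper
(`⊤ * n = ⊤` for `n ≠ 0`, `⊤ * 0 = 0`, `⊤ ^ n = ⊤` for `n ≥ 1`, `m ^ 0 = 1`).
-/

noncomputable section

/-- Formal substitution `f ∘ σ = ∑_n f_n σ^n`, defined coefficientwise: the coefficient
of `x^k` is `∑_{n ≤ k} f_n ⟨σ^n, x^k⟩`.  When the constant term of `σ` is zero this is
exactly the formal substitution (the omitted terms `n > k` contribute `0` since then
`coeff k (σ^n) = 0`). -/
def pscomp {K : Type*} [Field K] (f σ : PowerSeries K) : PowerSeries K :=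
  PowerSeries.mk fun k =>
    ∑ n ∈ Finset.range (k + 1), PowerSeries.coeff n f * PowerSeries.coeff k (σ ^ n)

/-- Compositional powers: `σ^{∘0} = x`, `σ^{∘(n+1)} = σ^{∘n} ∘ σ`. -/
def compPow {K : Type*} [Field K] (σ : PowerSeries K) : ℕ → PowerSeries K
  | 0 => PowerSeries.X
  | n + 1 => pscomp (compPow σ n) σ

/-- The Riordan near-algebra multiplication on `K[[x]] × 𝔐`:
`(μ₁,σ₁) ⋊ (μ₂,σ₂) := ((μ₁ ∘ σ₂)·μ₂, σ₁ ∘ σ₂)`. -/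
def rmul {K : Type*} [Field K] (p q : PowerSeries K × PowerSeries K) :
    PowerSeries K × PowerSeries K :=
  (pscomp p.1 q.2 * q.1, pscomp p.2 q.2)

/-- `⋊`-powers: `p^{⋊0} = (1, x)`, `p^{⋊(n+1)} = p^{⋊n} ⋊ p`. -/
def rpow {K : Type*} [Field K] (p : PowerSeries K × PowerSeries K) :
    ℕ → PowerSeries K × PowerSeries K
  | 0 => (1, PowerSeries.X)
  | n + 1 => rmul (rpow p n) p

/-- The product (coefficientwise) topology on `K[[x]]`, the coefficient field `K`
carrying the discrete topology `⊥`. -/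
def psTop (K : Type*) : TopologicalSpace (PowerSeries K) :=
  @Pi.topologicalSpace (Unit →₀ ℕ) (fun _ => K) (fun _ => ⊥)

/-- The generalized binomial coefficient `C(λ,n) = λ(λ-1)⋯(λ-n+1)/n!`. -/
def gchoose {K : Type*} [Field K] (lam : K) (n : ℕ) : K :=
  (∏ k ∈ Finset.range n, (lam - (k : K))) / (n.factorial : K)

/-!
Both components of `(μ₊,σ₊)^{⋊n}` have order tending to infinity: since `ν(f ∘ σ) ≥ ν(f) ν(σ)`,
`ν(μ₊) ≥ 1` and `ν(σ₊) ≥ 2`, the first component has order `≥ n` and the second `≥ n + 1`.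
Hence each coefficient of the binomial sum only sees finitely many terms, and the coefficients
of `x^0` in `A` and of `x^0, x^1` in `B` come from the term `n = 0`, which is `(1, x)`.
-/

open PowerSeries

section Order

variable {K : Type*} [Field K]

lemma le_order_pscomp {f σ : PowerSeries K} {a b : ℕ} (hf : (a : ℕ∞) ≤ f.order)
    (hσ : (b : ℕ∞) ≤ σ.order) : ((a * b : ℕ) : ℕ∞) ≤ (pscomp f σ).order := by
  refine nat_le_order _ _ fun j hj => ?_
  rw [pscomp, coeff_mk]
  refine Finset.sum_eq_zero fun n _ => ?_
  rcases lt_or_ge n a with hna | hna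
  · rw [coeff_of_lt_order n (lt_of_lt_of_le (by exact_mod_cast hna) hf), zero_mul]
  · have hσn : ((n * b : ℕ) : ℕ∞) ≤ (σ ^ n).order := by
      rw [Nat.cast_mul, ← nsmul_eq_mul]
      exact (nsmul_le_nsmul_right hσ n).trans (le_order_pow σ n)
    have hj' : ((j : ℕ) : ℕ∞) < (n * b : ℕ) := by
      exact_mod_cast hj.trans_le (Nat.mul_le_mul_right b hna)
    rw [coeff_of_lt_order j (hj'.trans_le hσn), mul_zero]

lemma le_order_rpow_fst {p : PowerSeries K × PowerSeries K} (h₁ : 1 ≤ p.1.order)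
    (h₂ : 1 ≤ p.2.order) (n : ℕ) : (n : ℕ∞) ≤ (rpow p n).1.order := by
  induction n with
  | zero => simp
  | succ n ih =>
    calc ((n + 1 : ℕ) : ℕ∞) = ((n * 1 : ℕ) : ℕ∞) + 1 := by push_cast; ring
      _ ≤ (pscomp (rpow p n).1 p.2).order + p.1.order :=
        add_le_add (le_order_pscomp ih (by exact_mod_cast h₂)) h₁
      _ ≤ (rpow p (n + 1)).1.order := le_order_mul _ _

lemma le_order_rpow_snd {p : PowerSeries K × PowerSeries K} (h₂ : 2 ≤ p.2.order) (n : ℕ) :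
    ((n + 1 : ℕ) : ℕ∞) ≤ (rpow p n).2.order := by
  induction n with
  | zero => simp [rpow]
  | succ n ih =>
    calc ((n + 1 + 1 : ℕ) : ℕ∞) ≤ (((n + 1) * 2 : ℕ) : ℕ∞) := by gcongr; omega
      _ ≤ (rpow p (n + 1)).2.order := le_order_pscomp ih (by exact_mod_cast h₂)

end Order

open scoped PowerSeries.WithPiTopology in
lemma hasSum_of_le_order {R : Type*} [Semiring R] [TopologicalSpace R] {f : ℕ → PowerSeries R}
    (hf : ∀ n : ℕ, (n : ℕ∞) ≤ (f n).order) :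
    HasSum f (mk fun d => ∑ n ∈ Finset.range (d + 1), coeff d (f n)) := by
  refine (WithPiTopology.hasSum_iff_hasSum_coeff R).mpr fun d => ?_
  rw [coeff_mk]
  refine hasSum_sum_of_ne_finset_zero fun n hn => coeff_of_lt_order d (lt_of_lt_of_le ?_ (hf n))
  exact_mod_cast (by simpa using hn : d + 1 ≤ n)

lemma one_lt_order_sub_X {R : Type*} [Ring R] {g : PowerSeries R} (h₀ : constantCoeff g = 0)
    (h₁ : coeff 1 g = 1) : 1 < (g - X).order := by
  refine lt_of_lt_of_le (by norm_num : (1 : ℕ∞) < (2 : ℕ)) (nat_le_order _ 2 fun i hi => ?_)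
  interval_cases i <;> simp [h₀, h₁]

theorem stmt_19_general {K : Type*} [Field K] (μp σp : PowerSeries K)
    (hμ : 0 < μp.order) (hσ : 1 < σp.order) (lam : K) :
    letI : TopologicalSpace (PowerSeries K) := psTop K
    Summable (fun n : ℕ => gchoose lam n • rpow (μp, σp) n) ∧
    PowerSeries.constantCoeff (∑' n : ℕ, gchoose lam n • rpow (μp, σp) n).1 = 1 ∧
    1 < ((∑' n : ℕ, gchoose lam n • rpow (μp, σp) n).2 - PowerSeries.X).order := by
  let : TopologicalSpace K := ⊥
  let : TopologicalSpace (PowerSeries K) := psTop K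
  have : DiscreteTopology K := ⟨rfl⟩
  have : T2Space (PowerSeries K) := WithPiTopology.instT2Space K
  set F : ℕ → PowerSeries K × PowerSeries K := fun n => gchoose lam n • rpow (μp, σp) n
  have hμ₁ : 1 ≤ μp.order := Order.one_le_iff_pos.mpr hμ
  have hσ₂ : 2 ≤ σp.order := Order.add_one_le_of_lt hσ
  have hfst (n : ℕ) : (n : ℕ∞) ≤ (F n).1.order :=
    (le_order_rpow_fst hμ₁ (one_le_two.trans hσ₂) n).trans le_order_smul
  have hsnd (n : ℕ) : ((n + 1 : ℕ) : ℕ∞) ≤ (F n).2.order :=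
    (le_order_rpow_snd hσ₂ n).trans le_order_smul
  have hsum : HasSum F _ := (hasSum_of_le_order hfst).prodMk
    (hasSum_of_le_order (f := fun n => (F n).2) fun n => (Nat.cast_le.mpr n.le_succ).trans (hsnd n))
  have hF₁ : coeff 1 (F 1).2 = 0 := coeff_of_lt_order 1 (lt_of_lt_of_le (by norm_num) (hsnd 1))
  rw [hsum.tsum_eq]
  refine ⟨hsum.summable, by simp [F, rpow, gchoose], one_lt_order_sub_X ?_ ?_⟩
  · simp [F, rpow]
  · rw [coeff_mk, Finset.sum_range_succ, Finset.sum_range_one, hF₁]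
    simp [F, rpow, gchoose]

/-- for `ν(μ₊) > 0`, `ν(σ₊) > 1` and `λ ∈ K`, the binomial family
`(C(λ,n) • (μ₊,σ₊)^{⋊n})` is summable in `K[[x]] × 𝔐` with the product topology, and
its sum `(A,B)` lies in the Riordan group `UM × US`: the constant term of `A` is `1`
and `ν(B - x) > 1`. -/
theorem stmt_19 {K : Type*} [Field K] [CharZero K] (μp σp : PowerSeries K)
    (hμ : 0 < μp.order) (hσ : 1 < σp.order) (lam : K) :
    letI : TopologicalSpace (PowerSeries K) := psTop K
    Summable (fun n : ℕ => gchoose lam n • rpow (μp, σp) n) ∧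
    PowerSeries.constantCoeff (∑' n : ℕ, gchoose lam n • rpow (μp, σp) n).1 = 1 ∧
    1 < ((∑' n : ℕ, gchoose lam n • rpow (μp, σp) n).2 - PowerSeries.X).order :=
  stmt_19_general μp σp hμ hσ lam
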